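/- For all real θ, φ and real numbers a, b, and nonnegative integers i, j, the product (a·cos θ + b·cos φ)^i · (a·sin θ + b·sin φ)^j can be written as a finite real linear combination of functions of the form cos(r·θ + σ·s·φ + ψ), where r, s are nonnegative integers with r + s ≤ i + j, σ ∈ {−1, 1}, and ψ ∈ {0, π/2}, plus a constant term. -/

import Mathlib

open Real Submodule
open scoped Pointwise

/-!
Complexify. The coordinates `x`, `y` are linear combinations of `exp (± i θ)` and
`exp (± i φ)`, and the complex span of the exponentials `exp (i (p θ + q φ))` with
`|p| + |q| ≤ n` is multiplicative in `n`, so `x ^ i * y ^ j` lies in this span for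
`n = i + j`. Taking real parts, `Re (c exp (i u)) = Re c cos u + Im c cos (u + π / 2)`, and a
negative coefficient `p` is made nonnegative through `cos (-u) = cos u`. The constant term
is `cos (0 θ + 0 φ)`, so `c₀ = 0` suffices.
-/

namespace Kempe

noncomputable def expMonomial (p q : ℤ) (θ φ : ℝ) : ℂ :=
  Complex.exp (↑(p * θ + q * φ) * Complex.I)

def trigPoly (n : ℕ) : Submodule ℂ (ℝ → ℝ → ℂ) :=
  span ℂ {f | ∃ p q : ℤ, p.natAbs + q.natAbs ≤ n ∧ f = expMonomial p q}

lemma expMonomial_mul (p q p' q' : ℤ) :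
    expMonomial p q * expMonomial p' q' = expMonomial (p + p') (q + q') := by
  funext θ φ
  simp only [expMonomial, Pi.mul_apply, ← Complex.exp_add]
  push_cast
  ring_nf

lemma expMonomial_zero : expMonomial 0 0 = 1 := by
  funext θ φ
  simp [expMonomial]

lemma expMonomial_mem_trigPoly {n : ℕ} {p q : ℤ} (h : p.natAbs + q.natAbs ≤ n) :
    expMonomial p q ∈ trigPoly n :=
  subset_span ⟨p, q, h, rfl⟩

lemma trigPoly_mul_le (n k : ℕ) : trigPoly n * trigPoly k ≤ trigPoly (n + k) := by
  rw [trigPoly, trigPoly, span_mul_span, span_le]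
  rintro _ ⟨_, ⟨p, q, hpq, rfl⟩, _, ⟨p', q', hpq', rfl⟩, rfl⟩
  dsimp only
  rw [expMonomial_mul]
  apply expMonomial_mem_trigPoly
  have := Int.natAbs_add_le p p'
  have := Int.natAbs_add_le q q'
  omega

lemma mul_mem_trigPoly {n k : ℕ} {f g : ℝ → ℝ → ℂ} (hf : f ∈ trigPoly n)
    (hg : g ∈ trigPoly k) : f * g ∈ trigPoly (n + k) :=
  trigPoly_mul_le n k (mul_mem_mul hf hg)

lemma pow_mem_trigPoly {n : ℕ} {f : ℝ → ℝ → ℂ} (hf : f ∈ trigPoly n) (i : ℕ) :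
    f ^ i ∈ trigPoly (n * i) := by
  induction i with
  | zero =>
    rw [pow_zero, mul_zero, ← expMonomial_zero]
    exact expMonomial_mem_trigPoly le_rfl
  | succ i ih => simpa [pow_succ, mul_add_one] using mul_mem_trigPoly ih hf

lemma ofReal_cos_mem_trigPoly {n : ℕ} {p q : ℤ} (h : p.natAbs + q.natAbs ≤ n) :
    (fun θ φ => (Real.cos (p * θ + q * φ) : ℂ)) ∈ trigPoly n := by
  have h' : (-p).natAbs + (-q).natAbs ≤ n := by simpa using h
  have hexp : (fun θ φ => (Real.cos (p * θ + q * φ) : ℂ)) =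
      (2⁻¹ : ℂ) • (expMonomial p q + expMonomial (-p) (-q)) := by
    funext θ φ
    simp only [Complex.ofReal_cos, Complex.cos, expMonomial, Pi.smul_apply, Pi.add_apply]
    push_cast
    ring_nf
  rw [hexp]
  exact smul_mem _ _ (add_mem (expMonomial_mem_trigPoly h) (expMonomial_mem_trigPoly h'))

lemma ofReal_sin_mem_trigPoly {n : ℕ} {p q : ℤ} (h : p.natAbs + q.natAbs ≤ n) :
    (fun θ φ => (Real.sin (p * θ + q * φ) : ℂ)) ∈ trigPoly n := by
  have h' : (-p).natAbs + (-q).natAbs ≤ n := by simpa using h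
  have hexp : (fun θ φ => (Real.sin (p * θ + q * φ) : ℂ)) =
      (Complex.I / 2) • (expMonomial (-p) (-q) - expMonomial p q) := by
    funext θ φ
    simp only [Complex.ofReal_sin, Complex.sin, expMonomial, Pi.smul_apply, Pi.sub_apply]
    push_cast
    ring_nf
  rw [hexp]
  exact smul_mem _ _ (sub_mem (expMonomial_mem_trigPoly h') (expMonomial_mem_trigPoly h))

lemma ofReal_linear_cos_mem_trigPoly (a b : ℝ) :
    (fun θ φ => ((a * Real.cos θ + b * Real.cos φ : ℝ) : ℂ)) ∈ trigPoly 1 := by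
  have hfun : (fun θ φ => ((a * Real.cos θ + b * Real.cos φ : ℝ) : ℂ)) =
      (a : ℂ) • (fun θ φ => (Real.cos ((1 : ℤ) * θ + (0 : ℤ) * φ) : ℂ)) +
      (b : ℂ) • (fun θ φ => (Real.cos ((0 : ℤ) * θ + (1 : ℤ) * φ) : ℂ)) := by
    funext θ φ
    simp
  rw [hfun]
  exact add_mem (smul_mem _ _ (ofReal_cos_mem_trigPoly (by simp)))
    (smul_mem _ _ (ofReal_cos_mem_trigPoly (by simp)))

lemma ofReal_linear_sin_mem_trigPoly (a b : ℝ) :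
    (fun θ φ => ((a * Real.sin θ + b * Real.sin φ : ℝ) : ℂ)) ∈ trigPoly 1 := by
  have hfun : (fun θ φ => ((a * Real.sin θ + b * Real.sin φ : ℝ) : ℂ)) =
      (a : ℂ) • (fun θ φ => (Real.sin ((1 : ℤ) * θ + (0 : ℤ) * φ) : ℂ)) +
      (b : ℂ) • (fun θ φ => (Real.sin ((0 : ℤ) * θ + (1 : ℤ) * φ) : ℂ)) := by
    funext θ φ
    simp
  rw [hfun]
  exact add_mem (smul_mem _ _ (ofReal_sin_mem_trigPoly (by simp)))
    (smul_mem _ _ (ofReal_sin_mem_trigPoly (by simp)))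

def kempeCosines (n : ℕ) : Set (ℝ → ℝ → ℝ) :=
  {f | ∃ (r s : ℕ) (σ ψ : ℝ), (r + s ≤ n ∧ (σ = -1 ∨ σ = 1) ∧ (ψ = 0 ∨ ψ = π / 2)) ∧
    f = fun θ φ => Real.cos (r * θ + σ * (s * φ) + ψ)}

lemma cos_add_mem_kempeCosines {n r : ℕ} {q : ℤ} (h : r + q.natAbs ≤ n) {ψ : ℝ}
    (hψ : ψ = 0 ∨ ψ = π / 2) :
    (fun θ φ => Real.cos (r * θ + q * φ + ψ)) ∈ kempeCosines n := by
  obtain ⟨s, rfl | rfl⟩ := Int.eq_nat_or_neg q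
  · exact ⟨r, s, 1, ψ, ⟨by simpa using h, Or.inr rfl, hψ⟩, by funext θ φ; simp⟩
  · exact ⟨r, s, -1, ψ, ⟨by simpa using h, Or.inl rfl, hψ⟩, by funext θ φ; simp⟩

lemma cos_mem_span_kempeCosines {n : ℕ} {p q : ℤ} (h : p.natAbs + q.natAbs ≤ n) :
    (fun θ φ => Real.cos (p * θ + q * φ)) ∈ span ℝ (kempeCosines n) := by
  obtain ⟨r, rfl | rfl⟩ := Int.eq_nat_or_neg p
  · have hfun : (fun θ φ => Real.cos ((r : ℤ) * θ + q * φ)) =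
        fun θ φ => Real.cos (r * θ + q * φ + 0) := by
      simp
    rw [hfun]
    exact subset_span (cos_add_mem_kempeCosines (by simpa using h) (Or.inl rfl))
  · have hfun : (fun θ φ => Real.cos ((-r : ℤ) * θ + q * φ)) =
        fun θ φ => Real.cos (r * θ + (-q : ℤ) * φ + 0) := by
      funext θ φ
      rw [← Real.cos_neg]
      push_cast
      ring_nf
    rw [hfun]
    exact subset_span (cos_add_mem_kempeCosines (by simpa using h) (Or.inl rfl))

lemma sin_mem_span_kempeCosines {n : ℕ} {p q : ℤ} (h : p.natAbs + q.natAbs ≤ n) :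
    (fun θ φ => Real.sin (p * θ + q * φ)) ∈ span ℝ (kempeCosines n) := by
  obtain ⟨r, rfl | rfl⟩ := Int.eq_nat_or_neg p
  · have hfun : (fun θ φ => Real.sin ((r : ℤ) * θ + q * φ)) =
        -fun θ φ => Real.cos (r * θ + q * φ + π / 2) := by
      funext θ φ
      simp [Real.cos_add_pi_div_two]
    rw [hfun]
    exact neg_mem (subset_span (cos_add_mem_kempeCosines (by simpa using h) (Or.inr rfl)))
  · have hfun : (fun θ φ => Real.sin ((-r : ℤ) * θ + q * φ)) =
        fun θ φ => Real.cos (r * θ + (-q : ℤ) * φ + π / 2) := by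
      funext θ φ
      rw [Real.cos_add_pi_div_two, ← Real.sin_neg]
      push_cast
      ring_nf
    rw [hfun]
    exact subset_span (cos_add_mem_kempeCosines (by simpa using h) (Or.inr rfl))

lemma re_mem_span_kempeCosines {n : ℕ} {F : ℝ → ℝ → ℂ} (hF : F ∈ trigPoly n) :
    (fun θ φ => (F θ φ).re) ∈ span ℝ (kempeCosines n) := by
  -- `Re (d • F)` is not determined by `Re F`, so the induction carries every multiplier `c`.
  suffices ∀ c : ℂ, (fun θ φ => (c * F θ φ).re) ∈ span ℝ (kempeCosines n) by
    simpa using this 1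
  induction hF using span_induction with
  | mem F hF =>
    obtain ⟨p, q, hpq, rfl⟩ := hF
    intro c
    have hfun : (fun θ φ => (c * expMonomial p q θ φ).re) =
        c.re • (fun θ φ => Real.cos (p * θ + q * φ)) -
        c.im • (fun θ φ => Real.sin (p * θ + q * φ)) := by
      funext θ φ
      simp only [expMonomial, Complex.mul_re, Complex.exp_ofReal_mul_I_re,
        Complex.exp_ofReal_mul_I_im, Pi.sub_apply, Pi.smul_apply, smul_eq_mul]
    rw [hfun]
    exact sub_mem (smul_mem _ _ (cos_mem_span_kempeCosines hpq))
      (smul_mem _ _ (sin_mem_span_kempeCosines hpq))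
  | zero =>
    intro c
    convert zero_mem (span ℝ (kempeCosines n))
    simp
  | add F G _ _ hF hG =>
    intro c
    convert add_mem (hF c) (hG c) using 1
    funext θ φ
    simp [mul_add]
  | smul d F _ hF => intro c; simpa [mul_assoc] using hF (c * d)

end Kempe

/-- Kempe's trigonometric expansion of a monomial: substituting
`x = a cos θ + b cos φ`, `y = a sin θ + b sin φ` into `x^i * y^j` yields a
constant plus a finite linear combination of `cos (r θ + σ s φ + ψ)` with
`r + s ≤ i + j`, `σ ∈ {-1, 1}`, `ψ ∈ {0, π/2}`. -/
theorem kempe_monomial_expansion (a b : ℝ) (i j : ℕ) :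
    ∃ (m : ℕ) (c₀ : ℝ) (c : Fin m → ℝ) (r s : Fin m → ℕ) (σ ψ : Fin m → ℝ),
      (∀ k : Fin m, r k + s k ≤ i + j ∧ (σ k = -1 ∨ σ k = 1) ∧
        (ψ k = 0 ∨ ψ k = π / 2)) ∧
      ∀ θ φ : ℝ,
        (a * Real.cos θ + b * Real.cos φ) ^ i *
          (a * Real.sin θ + b * Real.sin φ) ^ j =
        c₀ + ∑ k : Fin m, c k * Real.cos (r k * θ + σ k * (s k * φ) + ψ k) := by
  have hmem := Kempe.mul_mem_trigPoly
    (Kempe.pow_mem_trigPoly (Kempe.ofReal_linear_cos_mem_trigPoly a b) i)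
    (Kempe.pow_mem_trigPoly (Kempe.ofReal_linear_sin_mem_trigPoly a b) j)
  rw [one_mul, one_mul] at hmem
  obtain ⟨m, c, g, hg⟩ := mem_span_set'.1 (Kempe.re_mem_span_kempeCosines hmem)
  choose r s σ ψ hshape hg' using fun k => (g k).2
  refine ⟨m, 0, c, r, s, σ, ψ, hshape, fun θ φ => ?_⟩
  have hpoint := congrFun (congrFun hg θ) φ
  simp only [hg', Finset.sum_apply, Pi.smul_apply, smul_eq_mul, Pi.mul_apply,
    Pi.pow_apply] at hpoint
  rw [zero_add, hpoint]
  norm_cast
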